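/- With notation as above, for all m ∈ M_α: φ_α(m_{(1,α)}) · p_α^M(m_{(0,e)}) = m, where here ρ_{e,α}(m) = m_{(0,e)} ⊗ m_{(1,α)}. -/

import Mathlib

open TensorProduct

noncomputable section

set_option synthInstance.maxHeartbeats 1000000
set_option maxHeartbeats 2000000

/-- Transport along an equality of indices for a family of modules. -/
def famCast {k : Type*} [CommSemiring k] {G : Type*} {H : G → Type*}
    [∀ α, AddCommMonoid (H α)] [∀ α, Module k (H α)] {x y : G} (h : x = y) :
    H x →ₗ[k] H y := by subst h; exact LinearMap.id

/-- A Hopf `G`-coalgebra over `k`. -/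
structure HopfGCoalgebra (k G : Type*) [Field k] [CommGroup G] where
  H : G → Type*
  [ring : ∀ α, Ring (H α)]
  [alg : ∀ α, Algebra k (H α)]
  Δ : ∀ α β : G, H (α * β) →ₐ[k] H α ⊗[k] H β
  ε : H 1 →ₐ[k] k
  coassoc : ∀ α β γ : G,
    (TensorProduct.assoc k (H α) (H β) (H γ)).toLinearMap ∘ₗ
      TensorProduct.map (Δ α β).toLinearMap LinearMap.id ∘ₗ (Δ (α * β) γ).toLinearMap
    = TensorProduct.map LinearMap.id (Δ β γ).toLinearMap ∘ₗ (Δ α (β * γ)).toLinearMap ∘ₗ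
        famCast (k := k) (mul_assoc α β γ)
  counit_left : ∀ α : G,
    (TensorProduct.lid k (H α)).toLinearMap ∘ₗ
      TensorProduct.map ε.toLinearMap LinearMap.id ∘ₗ (Δ 1 α).toLinearMap
    = famCast (k := k) (one_mul α)
  counit_right : ∀ α : G,
    (TensorProduct.rid k (H α)).toLinearMap ∘ₗ
      TensorProduct.map LinearMap.id ε.toLinearMap ∘ₗ (Δ α 1).toLinearMap
    = famCast (k := k) (mul_one α)
  S : ∀ α : G, H α →ₗ[k] H α⁻¹
  antipode_left : ∀ α : G,
    LinearMap.mul' k (H α) ∘ₗ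
      TensorProduct.map (famCast (k := k) (inv_inv α) ∘ₗ S α⁻¹) LinearMap.id ∘ₗ
      (Δ α⁻¹ α).toLinearMap ∘ₗ famCast (k := k) (inv_mul_cancel α).symm
    = Algebra.linearMap k (H α) ∘ₗ ε.toLinearMap
  antipode_right : ∀ α : G,
    LinearMap.mul' k (H α⁻¹) ∘ₗ
      TensorProduct.map LinearMap.id (S α) ∘ₗ
      (Δ α⁻¹ α).toLinearMap ∘ₗ famCast (k := k) (inv_mul_cancel α).symm
    = Algebra.linearMap k (H α⁻¹) ∘ₗ ε.toLinearMap

attribute [instance] HopfGCoalgebra.ring HopfGCoalgebra.alg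
variable {k G : Type*} [Field k] [CommGroup G]

/-- A family of Poisson algebras which is a right `H`-comodule Poisson algebra. -/
structure GComodulePoissonAlgebra (Hc : HopfGCoalgebra k G) where
  A : G → Type*
  [cring : ∀ α, CommRing (A α)]
  [alg : ∀ α, Algebra k (A α)]
  pb : ∀ α : G, A α →ₗ[k] A α →ₗ[k] A α
  pb_skew : ∀ (α : G) (a b : A α), pb α a b = - pb α b a
  pb_jacobi : ∀ (α : G) (a b c : A α),
    pb α a (pb α b c) = pb α (pb α a b) c + pb α b (pb α a c)
  pb_leibniz : ∀ (α : G) (a b c : A α), pb α a (b * c) = pb α a b * c + b * pb α a c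
  ρ : ∀ α β : G, A (α * β) →ₐ[k] A α ⊗[k] Hc.H β
  coassoc : ∀ α β γ : G,
    (TensorProduct.assoc k (A α) (Hc.H β) (Hc.H γ)).toLinearMap ∘ₗ
      TensorProduct.map (ρ α β).toLinearMap LinearMap.id ∘ₗ (ρ (α * β) γ).toLinearMap
    = TensorProduct.map LinearMap.id (Hc.Δ β γ).toLinearMap ∘ₗ (ρ α (β * γ)).toLinearMap ∘ₗ
        famCast (k := k) (mul_assoc α β γ)
  counit : ∀ α : G,
    (TensorProduct.rid k (A α)).toLinearMap ∘ₗ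
      TensorProduct.map LinearMap.id Hc.ε.toLinearMap ∘ₗ (ρ α 1).toLinearMap
    = famCast (k := k) (mul_one α)
  pb_comp : ∀ α β : G,
    (ρ α β).toLinearMap ∘ₗ TensorProduct.lift (pb (α * β))
    = TensorProduct.map (TensorProduct.lift (pb α)) (LinearMap.mul' k (Hc.H β)) ∘ₗ
        (TensorProduct.tensorTensorTensorComm k (A α) (Hc.H β) (A α) (Hc.H β)).toLinearMap ∘ₗ
        TensorProduct.map (ρ α β).toLinearMap (ρ α β).toLinearMap

attribute [instance] GComodulePoissonAlgebra.cring GComodulePoissonAlgebra.alg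

/-- A Poisson `(A,H)`-Hopf module. -/
structure PoissonHopfModule {Hc : HopfGCoalgebra k G}
    (Ac : GComodulePoissonAlgebra Hc) where
  M : G → Type*
  [acg : ∀ α, AddCommGroup (M α)]
  [mod : ∀ α, Module k (M α)]
  smul : ∀ α : G, Ac.A α →ₗ[k] M α →ₗ[k] M α
  one_smul : ∀ (α : G) (m : M α), smul α 1 m = m
  mul_smul : ∀ (α : G) (a b : Ac.A α) (m : M α), smul α (a * b) m = smul α a (smul α b m)
  dia : ∀ α : G, Ac.A α →ₗ[k] M α →ₗ[k] M α
  dia_lie : ∀ (α : G) (a b : Ac.A α) (m : M α),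
    dia α (Ac.pb α a b) m = dia α a (dia α b m) - dia α b (dia α a m)
  poisson1 : ∀ (α : G) (a b : Ac.A α) (m : M α),
    dia α a (smul α b m) = smul α (Ac.pb α a b) m + smul α b (dia α a m)
  poisson2 : ∀ (α : G) (a b : Ac.A α) (m : M α),
    dia α (a * b) m = smul α a (dia α b m) + smul α b (dia α a m)
  ρ : ∀ α β : G, M (α * β) →ₗ[k] M α ⊗[k] Hc.H β
  coassoc : ∀ α β γ : G,
    (TensorProduct.assoc k (M α) (Hc.H β) (Hc.H γ)).toLinearMap ∘ₗ
      TensorProduct.map (ρ α β) LinearMap.id ∘ₗ ρ (α * β) γ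
    = TensorProduct.map LinearMap.id (Hc.Δ β γ).toLinearMap ∘ₗ ρ α (β * γ) ∘ₗ
        famCast (k := k) (mul_assoc α β γ)
  counit : ∀ α : G,
    (TensorProduct.rid k (M α)).toLinearMap ∘ₗ
      TensorProduct.map LinearMap.id Hc.ε.toLinearMap ∘ₗ ρ α 1
    = famCast (k := k) (mul_one α)
  smul_comp : ∀ α β : G,
    ρ α β ∘ₗ TensorProduct.lift (smul (α * β))
    = TensorProduct.map (TensorProduct.lift (smul α)) (LinearMap.mul' k (Hc.H β)) ∘ₗ
        (TensorProduct.tensorTensorTensorComm k (Ac.A α) (Hc.H β) (M α) (Hc.H β)).toLinearMap ∘ₗ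
        TensorProduct.map (Ac.ρ α β).toLinearMap (ρ α β)
  dia_comp : ∀ α β : G,
    ρ α β ∘ₗ TensorProduct.lift (dia (α * β))
    = TensorProduct.map (TensorProduct.lift (dia α)) (LinearMap.mul' k (Hc.H β)) ∘ₗ
        (TensorProduct.tensorTensorTensorComm k (Ac.A α) (Hc.H β) (M α) (Hc.H β)).toLinearMap ∘ₗ
        TensorProduct.map (Ac.ρ α β).toLinearMap (ρ α β)

attribute [instance] PoissonHopfModule.acg PoissonHopfModule.mod

variable {Hc : HopfGCoalgebra k G} {Ac : GComodulePoissonAlgebra Hc}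

/-- A coinvariant family for a Poisson Hopf module. -/
def PoissonHopfModule.IsCoinv (Mc : PoissonHopfModule Ac) (m : ∀ γ : G, Mc.M γ) : Prop :=
  ∀ γ β : G, Mc.ρ γ β (m (γ * β)) = m γ ⊗ₜ[k] (1 : Hc.H β)

/-- A coinvariant family for the comodule algebra `A`. -/
def GComodulePoissonAlgebra.IsCoinv (Ac : GComodulePoissonAlgebra Hc)
    (a : ∀ γ : G, Ac.A γ) : Prop :=
  ∀ γ β : G, Ac.ρ γ β (a (γ * β)) = a γ ⊗ₜ[k] (1 : Hc.H β)

/-- `M^{A_α}_α`, the space of elements killed by the Lie action. -/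
def PoissonHopfModule.diaInv (Mc : PoissonHopfModule Ac) (α : G) :
    Submodule k (Mc.M α) where
  carrier := {m | ∀ a : Ac.A α, Mc.dia α a m = 0}
  zero_mem' := fun a => map_zero _
  add_mem' := fun {x y} hx hy a => by rw [map_add, hx a, hy a, add_zero]
  smul_mem' := fun c x hx a => by rw [map_smul, hx a, smul_zero]

/-- The Poisson-central part `A^{A_α}_α` of `A_α`. -/
def GComodulePoissonAlgebra.center (Ac : GComodulePoissonAlgebra Hc) (α : G) :
    Submodule k (Ac.A α) where
  carrier := {a | ∀ b : Ac.A α, Ac.pb α a b = 0}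
  zero_mem' := fun b => by rw [map_zero]; rfl
  add_mem' := fun {x y} hx hy b => by rw [map_add]; simp [hx b, hy b]
  smul_mem' := fun c x hx b => by rw [map_smul]; simp [hx b]

/-- `M^{coH}_α` for a Poisson Hopf module. -/
def PoissonHopfModule.coinv (Mc : PoissonHopfModule Ac) (α : G) : Set (Mc.M α) :=
  {x | ∃ m : ∀ γ : G, Mc.M γ, Mc.IsCoinv m ∧ m α = x}

/-- `A^{coH}_α`. -/
def GComodulePoissonAlgebra.coinv (Ac : GComodulePoissonAlgebra Hc) (α : G) :
    Set (Ac.A α) :=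
  {x | ∃ a : ∀ γ : G, Ac.A γ, Ac.IsCoinv a ∧ a α = x}

/-- `p^M_α : M_e → M_α`, `m ↦ φ_α(S_α⁻¹(m_{(1,α⁻¹)})) · m_{(0,α)}`. -/
def pMapM (Mc : PoissonHopfModule Ac) (φ : ∀ α : G, Hc.H α →ₗ[k] Ac.A α)
    (Sinv : ∀ α : G, Hc.H α⁻¹ →ₗ[k] Hc.H α) (α : G) : Mc.M 1 →ₗ[k] Mc.M α :=
  TensorProduct.lift ((Mc.smul α).flip) ∘ₗ
    TensorProduct.map LinearMap.id (φ α ∘ₗ Sinv α) ∘ₗ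
    Mc.ρ α α⁻¹ ∘ₗ famCast (k := k) (mul_inv_cancel α).symm

variable (Ac) in
/-- `p^A_α : A_e → A_α`, `a ↦ φ_α(S_α⁻¹(a_{(1,α⁻¹)})) a_{(0,α)}`. -/
def pMapA (φ : ∀ α : G, Hc.H α →ₗ[k] Ac.A α)
    (Sinv : ∀ α : G, Hc.H α⁻¹ →ₗ[k] Hc.H α) (α : G) : Ac.A 1 →ₗ[k] Ac.A α :=
  LinearMap.mul' k (Ac.A α) ∘ₗ
    TensorProduct.map LinearMap.id (φ α ∘ₗ Sinv α) ∘ₗ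
    (Ac.ρ α α⁻¹).toLinearMap ∘ₗ famCast (k := k) (mul_inv_cancel α).symm

/-- `H`-colinearity for a family of maps `φ : H → A`. -/
def PhiColinear (φ : ∀ α : G, Hc.H α →ₗ[k] Ac.A α) : Prop :=
  ∀ α β : G,
    (Ac.ρ α β).toLinearMap ∘ₗ φ (α * β)
      = TensorProduct.map (φ α) LinearMap.id ∘ₗ (Hc.Δ α β).toLinearMap

/-- `Sinv` is a family of two-sided inverses of the antipode. -/
def IsAntipodeInv (Hc : HopfGCoalgebra k G)
    (Sinv : ∀ α : G, Hc.H α⁻¹ →ₗ[k] Hc.H α) : Prop :=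
  ∀ α : G, Sinv α ∘ₗ Hc.S α = LinearMap.id ∧ Hc.S α ∘ₗ Sinv α = LinearMap.id

set_option linter.unusedSectionVars false

section TensorToolkit

variable {P Q R P' Q' R' T B : Type*}
  [AddCommMonoid P] [AddCommMonoid Q] [AddCommMonoid R] [AddCommMonoid T]
  [AddCommMonoid P'] [AddCommMonoid Q'] [AddCommMonoid R']
  [Module k P] [Module k Q] [Module k R] [Module k T]
  [Module k P'] [Module k Q'] [Module k R']
  [Ring B] [Algebra k B]

local notation "mulB" => LinearMap.mul' k B

lemma mul'_assoc :
    mulB ∘ₗ TensorProduct.map mulB LinearMap.id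
      = mulB ∘ₗ TensorProduct.map LinearMap.id mulB ∘ₗ
        (TensorProduct.assoc k B B B).toLinearMap := by
  apply TensorProduct.ext_threefold; intro x y z; simp [mul_assoc]

lemma mul'_unit_right :
    mulB ∘ₗ TensorProduct.map LinearMap.id (Algebra.linearMap k B)
      = (TensorProduct.rid k B).toLinearMap := by
  apply TensorProduct.ext'; intro x c
  simp [Algebra.algebraMap_eq_smul_one, mul_smul_comm]

lemma mul'_unit_left :
    mulB ∘ₗ TensorProduct.map (Algebra.linearMap k B) LinearMap.id
      = (TensorProduct.lid k B).toLinearMap := by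
  apply TensorProduct.ext'; intro c x
  simp [Algebra.algebraMap_eq_smul_one, smul_mul_assoc]

lemma mul'_comm {C : Type*} [CommRing C] [Algebra k C] :
    LinearMap.mul' k C ∘ₗ (TensorProduct.comm k C C).toLinearMap = LinearMap.mul' k C := by
  apply TensorProduct.ext'; intro x y; simp [mul_comm]

lemma rid_naturality (f : P →ₗ[k] Q) :
    (TensorProduct.rid k Q).toLinearMap ∘ₗ TensorProduct.map f LinearMap.id
      = f ∘ₗ (TensorProduct.rid k P).toLinearMap := by
  apply TensorProduct.ext'; intro x c; simp

lemma lid_naturality (f : P →ₗ[k] Q) :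
    (TensorProduct.lid k Q).toLinearMap ∘ₗ TensorProduct.map LinearMap.id f
      = f ∘ₗ (TensorProduct.lid k P).toLinearMap := by
  apply TensorProduct.ext'; intro c x; simp

lemma assoc_naturality (f : P →ₗ[k] P') (g : Q →ₗ[k] Q') (h : R →ₗ[k] R') :
    (TensorProduct.assoc k P' Q' R').toLinearMap ∘ₗ
        TensorProduct.map (TensorProduct.map f g) h
      = TensorProduct.map f (TensorProduct.map g h) ∘ₗ
          (TensorProduct.assoc k P Q R).toLinearMap := by
  apply TensorProduct.ext_threefold; intro x y z; simp

lemma ttt_naturality (f : P →ₗ[k] P') (g : Q →ₗ[k] Q') (h : R →ₗ[k] R')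
    (l : T →ₗ[k] T) :
    TensorProduct.map (TensorProduct.map f g) (TensorProduct.map h l) ∘ₗ
        (TensorProduct.tensorTensorTensorComm k P R Q T).toLinearMap
      = (TensorProduct.tensorTensorTensorComm k P' R' Q' T).toLinearMap ∘ₗ
          TensorProduct.map (TensorProduct.map f h) (TensorProduct.map g l) := by
  apply TensorProduct.ext_fourfold'; intro x y z w; simp

end TensorToolkit

section Toolkit

variable {H : G → Type*} [∀ α, AddCommMonoid (H α)] [∀ α, Module k (H α)]

@[simp] lemma famCast_rfl {x : G} (h : x = x) :
    famCast (k := k) (H := H) h = LinearMap.id := rfl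

lemma famCast_comp {x y z : G} (h : x = y) (h' : y = z) :
    famCast (k := k) (H := H) h' ∘ₗ famCast (k := k) h = famCast (k := k) (h.trans h') := by
  subst h h'; rfl

@[simp] lemma famCast_comp_cancel {x y : G} (h : x = y) (h' : y = x) :
    famCast (k := k) (H := H) h' ∘ₗ famCast (k := k) h = LinearMap.id := by
  subst h; rfl

end Toolkit

section Toolkit2

variable {Hc : HopfGCoalgebra k G}

lemma famCast_one {x y : G} (h : x = y) :
    famCast (k := k) (H := Hc.H) h 1 = 1 := by subst h; rfl

lemma famCast_mul' {x y : G} (h : x = y) :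
    famCast (k := k) (H := Hc.H) h ∘ₗ LinearMap.mul' k (Hc.H x)
      = LinearMap.mul' k (Hc.H y) ∘ₗ
        TensorProduct.map (famCast (k := k) h) (famCast (k := k) h) := by
  subst h; simp

lemma castΔ_fst {a a' : G} (h : a = a') (b : G) (h' : a * b = a' * b) :
    (Hc.Δ a' b).toLinearMap ∘ₗ famCast (k := k) h'
      = TensorProduct.map (famCast (k := k) h) LinearMap.id ∘ₗ (Hc.Δ a b).toLinearMap := by
  subst h; simp

lemma castΔ_snd {b b' : G} (h : b = b') (a : G) (h' : a * b = a * b') :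
    (Hc.Δ a b').toLinearMap ∘ₗ famCast (k := k) h'
      = TensorProduct.map LinearMap.id (famCast (k := k) h) ∘ₗ (Hc.Δ a b).toLinearMap := by
  subst h; simp

lemma castS {a a' : G} (h : a = a') (h' : a⁻¹ = a'⁻¹) :
    Hc.S a' ∘ₗ famCast (k := k) h = famCast (k := k) h' ∘ₗ Hc.S a := by
  subst h; simp

end Toolkit2

section MulTensor

variable {B C : Type*} [Ring B] [Algebra k B] [Ring C] [Algebra k C]

lemma mul'_tensor :
    LinearMap.mul' k (B ⊗[k] C)
      = TensorProduct.map (LinearMap.mul' k B) (LinearMap.mul' k C) ∘ₗ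
        (TensorProduct.tensorTensorTensorComm k B C B C).toLinearMap := by
  apply TensorProduct.ext_fourfold'; intro x y z w
  simp [Algebra.TensorProduct.tmul_mul_tmul]

end MulTensor

section ShuffleDC

variable {P Q R : Type*} [AddCommMonoid P] [AddCommMonoid Q] [AddCommMonoid R]
  [Module k P] [Module k Q] [Module k R]

lemma shuffleDC :
    (TensorProduct.assoc k (P ⊗[k] P) (Q ⊗[k] Q) (R ⊗[k] R)).toLinearMap ∘ₗ
      TensorProduct.map (TensorProduct.tensorTensorTensorComm k P Q P Q).toLinearMap
        LinearMap.id ∘ₗ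
      (TensorProduct.tensorTensorTensorComm k (P ⊗[k] Q) R (P ⊗[k] Q) R).toLinearMap ∘ₗ
      TensorProduct.map (TensorProduct.assoc k P Q R).symm.toLinearMap
        (TensorProduct.assoc k P Q R).symm.toLinearMap
    = TensorProduct.map LinearMap.id
        (TensorProduct.tensorTensorTensorComm k Q R Q R).toLinearMap ∘ₗ
      (TensorProduct.tensorTensorTensorComm k P (Q ⊗[k] R) P (Q ⊗[k] R)).toLinearMap := by
  apply TensorProduct.ext'; intro t s
  induction t using TensorProduct.induction_on with
  | zero => simp
  | add t₁ t₂ h₁ h₂ => simp only [add_tmul, map_add, h₁, h₂]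
  | tmul x u =>
    induction u using TensorProduct.induction_on with
    | zero => simp
    | add u₁ u₂ h₁ h₂ =>
        simp only [tmul_add, add_tmul, map_add, h₁, h₂]
    | tmul y z =>
      induction s using TensorProduct.induction_on with
      | zero => simp
      | add s₁ s₂ h₁ h₂ => simp only [tmul_add, map_add, h₁, h₂]
      | tmul x' u' =>
        induction u' using TensorProduct.induction_on with
        | zero => simp
        | add u₁ u₂ h₁ h₂ =>
            simp only [tmul_add, map_add, h₁, h₂]
        | tmul y' z' => simp

end ShuffleDC

namespace HopfGCoalgebra

variable (Hc : HopfGCoalgebra k G)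

/-- The tensor-square "coproduct". -/
def D (a b : G) :
    (Hc.H (a * b) ⊗[k] Hc.H (a * b)) →ₗ[k]
      (Hc.H a ⊗[k] Hc.H a) ⊗[k] (Hc.H b ⊗[k] Hc.H b) :=
  (TensorProduct.tensorTensorTensorComm k (Hc.H a) (Hc.H b) (Hc.H a) (Hc.H b)).toLinearMap ∘ₗ
    TensorProduct.map (Hc.Δ a b).toLinearMap (Hc.Δ a b).toLinearMap

variable {Hc}

lemma famCastX_eq {x y : G} (h : x = y) :
    famCast (k := k) (H := fun c => Hc.H c ⊗[k] Hc.H c) h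
      = TensorProduct.map (famCast (k := k) (H := Hc.H) h) (famCast (k := k) h) := by
  subst h; simp

lemma castD_fst {a a' : G} (h : a = a') (b : G) (h' : a * b = a' * b) :
    Hc.D a' b ∘ₗ famCast (k := k) (H := fun c => Hc.H c ⊗[k] Hc.H c) h'
      = TensorProduct.map (famCast (k := k) (H := fun c => Hc.H c ⊗[k] Hc.H c) h)
          LinearMap.id ∘ₗ Hc.D a b := by
  subst h; simp

lemma castD_snd {b b' : G} (h : b = b') (a : G) (h' : a * b = a * b') :
    Hc.D a b' ∘ₗ famCast (k := k) (H := fun c => Hc.H c ⊗[k] Hc.H c) h'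
      = TensorProduct.map LinearMap.id
          (famCast (k := k) (H := fun c => Hc.H c ⊗[k] Hc.H c) h) ∘ₗ Hc.D a b := by
  subst h; simp

/-- `Δ` is multiplicative, in tensor-square form. -/
lemma Δ_mul' (a b : G) :
    (Hc.Δ a b).toLinearMap ∘ₗ LinearMap.mul' k (Hc.H (a * b))
      = TensorProduct.map (LinearMap.mul' k (Hc.H a)) (LinearMap.mul' k (Hc.H b)) ∘ₗ
          Hc.D a b := by
  rw [D, ← LinearMap.comp_assoc, ← mul'_tensor]
  apply TensorProduct.ext'; intro x y
  simp [map_mul]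

end HopfGCoalgebra

namespace HopfGCoalgebra

variable {Hc : HopfGCoalgebra k G}

@[simp] lemma D_tmul (a b : G) (x y : Hc.H (a * b)) :
    Hc.D a b (x ⊗ₜ[k] y)
      = TensorProduct.tensorTensorTensorComm k (Hc.H a) (Hc.H b) (Hc.H a) (Hc.H b)
          (Hc.Δ a b x ⊗ₜ[k] Hc.Δ a b y) := by
  simp [D]

lemma PL4 {a b c : G} (u v : Hc.H a ⊗[k] Hc.H b) (p q : Hc.H c) :
    TensorProduct.assoc k (Hc.H a ⊗[k] Hc.H a) (Hc.H b ⊗[k] Hc.H b) (Hc.H c ⊗[k] Hc.H c)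
        ((TensorProduct.tensorTensorTensorComm k (Hc.H a) (Hc.H b) (Hc.H a) (Hc.H b)
            (u ⊗ₜ[k] v)) ⊗ₜ[k] (p ⊗ₜ[k] q))
      = TensorProduct.map LinearMap.id
          (TensorProduct.tensorTensorTensorComm k (Hc.H b) (Hc.H c) (Hc.H b) (Hc.H c)).toLinearMap
          (TensorProduct.tensorTensorTensorComm k (Hc.H a) (Hc.H b ⊗[k] Hc.H c)
              (Hc.H a) (Hc.H b ⊗[k] Hc.H c)
            ((TensorProduct.assoc k (Hc.H a) (Hc.H b) (Hc.H c) (u ⊗ₜ[k] p)) ⊗ₜ[k]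
              (TensorProduct.assoc k (Hc.H a) (Hc.H b) (Hc.H c) (v ⊗ₜ[k] q)))) := by
  induction u using TensorProduct.induction_on with
  | zero => simp
  | add u₁ u₂ h₁ h₂ => simp only [add_tmul, tmul_add, map_add, h₁, h₂]
  | tmul u₁ u₂ =>
    induction v using TensorProduct.induction_on with
    | zero => simp
    | add v₁ v₂ h₁ h₂ => simp only [add_tmul, tmul_add, map_add, h₁, h₂]
    | tmul v₁ v₂ => simp

lemma PL3 {a b c : G} (t₁ t₂ : Hc.H (a * b) ⊗[k] Hc.H c) :
    TensorProduct.assoc k _ _ _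
        (TensorProduct.map (Hc.D a b) LinearMap.id
          (TensorProduct.tensorTensorTensorComm k (Hc.H (a * b)) (Hc.H c)
              (Hc.H (a * b)) (Hc.H c) (t₁ ⊗ₜ[k] t₂)))
      = TensorProduct.map LinearMap.id
          (TensorProduct.tensorTensorTensorComm k (Hc.H b) (Hc.H c) (Hc.H b) (Hc.H c)).toLinearMap
          (TensorProduct.tensorTensorTensorComm k (Hc.H a) (Hc.H b ⊗[k] Hc.H c)
              (Hc.H a) (Hc.H b ⊗[k] Hc.H c)
            ((TensorProduct.assoc k (Hc.H a) (Hc.H b) (Hc.H c)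
                (TensorProduct.map (Hc.Δ a b).toLinearMap LinearMap.id t₁)) ⊗ₜ[k]
              (TensorProduct.assoc k (Hc.H a) (Hc.H b) (Hc.H c)
                (TensorProduct.map (Hc.Δ a b).toLinearMap LinearMap.id t₂)))) := by
  induction t₁ using TensorProduct.induction_on with
  | zero => simp
  | add u₁ u₂ h₁ h₂ => simp only [add_tmul, tmul_add, map_add, h₁, h₂]
  | tmul p₁ p₂ =>
    induction t₂ using TensorProduct.induction_on with
    | zero => simp
    | add u₁ u₂ h₁ h₂ => simp only [add_tmul, tmul_add, map_add, h₁, h₂]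
    | tmul q₁ q₂ =>
      simp only [TensorProduct.tensorTensorTensorComm_tmul, TensorProduct.map_tmul,
        LinearMap.id_coe, id_eq, D_tmul]
      exact PL4 (Hc.Δ a b p₁) (Hc.Δ a b q₁) p₂ q₂

lemma PL2 {a b c : G} (p q : Hc.H a ⊗[k] Hc.H (b * c)) :
    TensorProduct.map LinearMap.id (Hc.D b c)
        (TensorProduct.tensorTensorTensorComm k (Hc.H a) (Hc.H (b * c))
            (Hc.H a) (Hc.H (b * c)) (p ⊗ₜ[k] q))
      = TensorProduct.map LinearMap.id
          (TensorProduct.tensorTensorTensorComm k (Hc.H b) (Hc.H c) (Hc.H b) (Hc.H c)).toLinearMap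
          (TensorProduct.tensorTensorTensorComm k (Hc.H a) (Hc.H b ⊗[k] Hc.H c)
              (Hc.H a) (Hc.H b ⊗[k] Hc.H c)
            ((TensorProduct.map LinearMap.id (Hc.Δ b c).toLinearMap p) ⊗ₜ[k]
              (TensorProduct.map LinearMap.id (Hc.Δ b c).toLinearMap q))) := by
  induction p using TensorProduct.induction_on with
  | zero => simp
  | add u₁ u₂ h₁ h₂ => simp only [add_tmul, tmul_add, map_add, h₁, h₂]
  | tmul p₁ p₂ =>
    induction q using TensorProduct.induction_on with
    | zero => simp
    | add u₁ u₂ h₁ h₂ => simp only [add_tmul, tmul_add, map_add, h₁, h₂]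
    | tmul q₁ q₂ => simp

lemma D_coassoc (a b c : G) :
    (TensorProduct.assoc k _ _ _).toLinearMap ∘ₗ
        TensorProduct.map (Hc.D a b) LinearMap.id ∘ₗ Hc.D (a * b) c
      = TensorProduct.map LinearMap.id (Hc.D b c) ∘ₗ Hc.D a (b * c) ∘ₗ
          famCast (k := k) (H := fun c => Hc.H c ⊗[k] Hc.H c) (mul_assoc a b c) := by
  apply TensorProduct.ext'; intro x y
  have hx := LinearMap.congr_fun (Hc.coassoc a b c) x
  have hy := LinearMap.congr_fun (Hc.coassoc a b c) y
  simp only [LinearMap.comp_apply, LinearEquiv.coe_coe, AlgHom.toLinearMap_apply] at hx hy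
  simp only [LinearMap.comp_apply, LinearEquiv.coe_coe, famCastX_eq,
    TensorProduct.map_tmul, D_tmul, AlgHom.toLinearMap_apply]
  rw [PL2, ← hx, ← hy]
  exact PL3 (Hc.Δ (a * b) c x) (Hc.Δ (a * b) c y)

end HopfGCoalgebra

section MulPointwise

variable {P Q R B : Type*} [AddCommMonoid P] [AddCommMonoid Q] [AddCommMonoid R]
  [Module k P] [Module k Q] [Module k R] [Ring B] [Algebra k B]

lemma mul'_map_unit_right (f : P →ₗ[k] B) (q : Q →ₗ[k] k) (s : P ⊗[k] Q) :
    LinearMap.mul' k B (TensorProduct.map f (Algebra.linearMap k B ∘ₗ q) s)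
      = f (TensorProduct.rid k P (TensorProduct.map LinearMap.id q s)) := by
  induction s using TensorProduct.induction_on with
  | zero => simp
  | add s₁ s₂ h₁ h₂ => simp only [map_add, h₁, h₂]
  | tmul p w => simp [Algebra.algebraMap_eq_smul_one, mul_smul_comm]

lemma mul'_map_unit_left (f : P →ₗ[k] B) (q : Q →ₗ[k] k) (s : Q ⊗[k] P) :
    LinearMap.mul' k B (TensorProduct.map (Algebra.linearMap k B ∘ₗ q) f s)
      = f (TensorProduct.lid k P (TensorProduct.map q LinearMap.id s)) := by
  induction s using TensorProduct.induction_on with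
  | zero => simp
  | add s₁ s₂ h₁ h₂ => simp only [map_add, h₁, h₂]
  | tmul w p => simp [Algebra.algebraMap_eq_smul_one, smul_mul_assoc]

lemma mul'_map_assoc (f : P →ₗ[k] B) (g : Q →ₗ[k] B) (h : R →ₗ[k] B)
    (w : (P ⊗[k] Q) ⊗[k] R) :
    LinearMap.mul' k B
        (TensorProduct.map (LinearMap.mul' k B ∘ₗ TensorProduct.map f g) h w)
      = LinearMap.mul' k B
          (TensorProduct.map f (LinearMap.mul' k B ∘ₗ TensorProduct.map g h)
            (TensorProduct.assoc k P Q R w)) := by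
  induction w using TensorProduct.induction_on with
  | zero => simp
  | add s₁ s₂ h₁ h₂ => simp only [map_add, h₁, h₂]
  | tmul u r =>
    induction u using TensorProduct.induction_on with
    | zero => simp
    | add s₁ s₂ h₁ h₂ => simp only [add_tmul, map_add, h₁, h₂]
    | tmul p q => simp [mul_assoc]

end MulPointwise

namespace HopfGCoalgebra

variable {Hc : HopfGCoalgebra k G}

/-- abbreviation for the counit of the tensor-square coalgebra -/
noncomputable def εε (Hc : HopfGCoalgebra k G) : (Hc.H 1 ⊗[k] Hc.H 1) →ₗ[k] k :=
  Hc.ε.toLinearMap ∘ₗ LinearMap.mul' k (Hc.H 1)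

lemma SH2r {a : G} (p q : Hc.H a ⊗[k] Hc.H 1) :
    TensorProduct.rid k (Hc.H a ⊗[k] Hc.H a)
        (TensorProduct.map LinearMap.id Hc.εε
          (TensorProduct.tensorTensorTensorComm k (Hc.H a) (Hc.H 1) (Hc.H a) (Hc.H 1)
            (p ⊗ₜ[k] q)))
      = (TensorProduct.rid k (Hc.H a) (TensorProduct.map LinearMap.id Hc.ε.toLinearMap p)) ⊗ₜ[k]
          (TensorProduct.rid k (Hc.H a) (TensorProduct.map LinearMap.id Hc.ε.toLinearMap q)) := by
  induction p using TensorProduct.induction_on with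
  | zero => simp
  | add s₁ s₂ h₁ h₂ => simp only [add_tmul, map_add, h₁, h₂, add_tmul]
  | tmul p₁ p₂ =>
    induction q using TensorProduct.induction_on with
    | zero => simp
    | add s₁ s₂ h₁ h₂ => simp only [tmul_add, map_add, h₁, h₂, tmul_add]
    | tmul q₁ q₂ =>
      simp [εε, map_mul, smul_tmul', smul_smul, tmul_smul, mul_comm]

lemma SH2l {a : G} (p q : Hc.H 1 ⊗[k] Hc.H a) :
    TensorProduct.lid k (Hc.H a ⊗[k] Hc.H a)
        (TensorProduct.map Hc.εε LinearMap.id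
          (TensorProduct.tensorTensorTensorComm k (Hc.H 1) (Hc.H a) (Hc.H 1) (Hc.H a)
            (p ⊗ₜ[k] q)))
      = (TensorProduct.lid k (Hc.H a) (TensorProduct.map Hc.ε.toLinearMap LinearMap.id p)) ⊗ₜ[k]
          (TensorProduct.lid k (Hc.H a) (TensorProduct.map Hc.ε.toLinearMap LinearMap.id q)) := by
  induction p using TensorProduct.induction_on with
  | zero => simp
  | add s₁ s₂ h₁ h₂ => simp only [add_tmul, map_add, h₁, h₂, add_tmul]
  | tmul p₁ p₂ =>
    induction q using TensorProduct.induction_on with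
    | zero => simp
    | add s₁ s₂ h₁ h₂ => simp only [tmul_add, map_add, h₁, h₂, tmul_add]
    | tmul q₁ q₂ =>
      simp [εε, map_mul, smul_tmul', smul_smul, tmul_smul, mul_comm]

lemma D_counit_right (a : G) (t : Hc.H (a * 1) ⊗[k] Hc.H (a * 1)) :
    TensorProduct.rid k _ (TensorProduct.map LinearMap.id Hc.εε (Hc.D a 1 t))
      = famCast (k := k) (H := fun c => Hc.H c ⊗[k] Hc.H c) (mul_one a) t := by
  induction t using TensorProduct.induction_on with
  | zero => simp
  | add s₁ s₂ h₁ h₂ => simp only [map_add, h₁, h₂]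
  | tmul x y =>
    have hx := LinearMap.congr_fun (Hc.counit_right a) x
    have hy := LinearMap.congr_fun (Hc.counit_right a) y
    simp only [LinearMap.comp_apply, LinearEquiv.coe_coe, AlgHom.toLinearMap_apply] at hx hy
    rw [D_tmul, SH2r, hx, hy, famCastX_eq, TensorProduct.map_tmul]

lemma D_counit_left (a : G) (t : Hc.H (1 * a) ⊗[k] Hc.H (1 * a)) :
    TensorProduct.lid k _ (TensorProduct.map Hc.εε LinearMap.id (Hc.D 1 a t))
      = famCast (k := k) (H := fun c => Hc.H c ⊗[k] Hc.H c) (one_mul a) t := by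
  induction t using TensorProduct.induction_on with
  | zero => simp
  | add s₁ s₂ h₁ h₂ => simp only [map_add, h₁, h₂]
  | tmul x y =>
    have hx := LinearMap.congr_fun (Hc.counit_left a) x
    have hy := LinearMap.congr_fun (Hc.counit_left a) y
    simp only [LinearMap.comp_apply, LinearEquiv.coe_coe, AlgHom.toLinearMap_apply] at hx hy
    rw [D_tmul, SH2l, hx, hy, famCastX_eq, TensorProduct.map_tmul]

variable {B : Type*} [Ring B] [Algebra k B]

lemma conv_unit_right {a : G} (f : (Hc.H a ⊗[k] Hc.H a) →ₗ[k] B)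
    (t : Hc.H (a * 1) ⊗[k] Hc.H (a * 1)) :
    LinearMap.mul' k B
        (TensorProduct.map f (Algebra.linearMap k B ∘ₗ Hc.εε) (Hc.D a 1 t))
      = f (famCast (k := k) (H := fun c => Hc.H c ⊗[k] Hc.H c) (mul_one a) t) := by
  rw [mul'_map_unit_right, ← D_counit_right]

lemma conv_unit_left {a : G} (f : (Hc.H a ⊗[k] Hc.H a) →ₗ[k] B)
    (t : Hc.H (1 * a) ⊗[k] Hc.H (1 * a)) :
    LinearMap.mul' k B
        (TensorProduct.map (Algebra.linearMap k B ∘ₗ Hc.εε) f (Hc.D 1 a t))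
      = f (famCast (k := k) (H := fun c => Hc.H c ⊗[k] Hc.H c) (one_mul a) t) := by
  rw [mul'_map_unit_left, ← D_counit_left]

lemma conv_assoc {a b c : G}
    (f : (Hc.H a ⊗[k] Hc.H a) →ₗ[k] B) (g : (Hc.H b ⊗[k] Hc.H b) →ₗ[k] B)
    (h : (Hc.H c ⊗[k] Hc.H c) →ₗ[k] B) (t : Hc.H (a * b * c) ⊗[k] Hc.H (a * b * c)) :
    LinearMap.mul' k B
        (TensorProduct.map (LinearMap.mul' k B ∘ₗ TensorProduct.map f g ∘ₗ Hc.D a b) h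
          (Hc.D (a * b) c t))
      = LinearMap.mul' k B
          (TensorProduct.map f (LinearMap.mul' k B ∘ₗ TensorProduct.map g h ∘ₗ Hc.D b c)
            (Hc.D a (b * c)
              (famCast (k := k) (H := fun c => Hc.H c ⊗[k] Hc.H c) (mul_assoc a b c) t))) := by
  have key := LinearMap.congr_fun (D_coassoc (Hc := Hc) a b c) t
  simp only [LinearMap.comp_apply, LinearEquiv.coe_coe] at key
  have e1 : TensorProduct.map (LinearMap.mul' k B ∘ₗ TensorProduct.map f g ∘ₗ Hc.D a b) h
      = TensorProduct.map (LinearMap.mul' k B ∘ₗ TensorProduct.map f g) h ∘ₗ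
          TensorProduct.map (Hc.D a b) LinearMap.id := by
    rw [← TensorProduct.map_comp]; rfl
  have e2 : TensorProduct.map f (LinearMap.mul' k B ∘ₗ TensorProduct.map g h ∘ₗ Hc.D b c)
      = TensorProduct.map f (LinearMap.mul' k B ∘ₗ TensorProduct.map g h) ∘ₗ
          TensorProduct.map LinearMap.id (Hc.D b c) := by
    rw [← TensorProduct.map_comp]; rfl
  rw [e1, e2, LinearMap.comp_apply, LinearMap.comp_apply, mul'_map_assoc, key]

end HopfGCoalgebra

section CommHelpers

variable {P Q R T : Type*} [AddCommMonoid P] [AddCommMonoid Q] [AddCommMonoid R]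
  [AddCommMonoid T] [Module k P] [Module k Q] [Module k R] [Module k T]

lemma comm_map_pt (f : P →ₗ[k] Q) (g : R →ₗ[k] T) (u : P ⊗[k] R) :
    TensorProduct.comm k Q T (TensorProduct.map f g u)
      = TensorProduct.map g f (TensorProduct.comm k P R u) := by
  induction u using TensorProduct.induction_on with
  | zero => simp
  | add a b ha hb => simp only [map_add, ha, hb]
  | tmul a b => simp

lemma comm_comm_pt (u : P ⊗[k] R) :
    TensorProduct.comm k R P (TensorProduct.comm k P R u) = u := by
  induction u using TensorProduct.induction_on with
  | zero => simp
  | add a b ha hb => simp only [map_add, ha, hb]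
  | tmul a b => simp

lemma map_map_pt (f : Q →ₗ[k] R) (h : P →ₗ[k] Q) {P' Q' R' : Type*}
    [AddCommMonoid P'] [AddCommMonoid Q'] [AddCommMonoid R']
    [Module k P'] [Module k Q'] [Module k R']
    (g : Q' →ₗ[k] R') (l : P' →ₗ[k] Q') (u : P ⊗[k] P') :
    TensorProduct.map f g (TensorProduct.map h l u)
      = TensorProduct.map (f ∘ₗ h) (g ∘ₗ l) u :=
  LinearMap.congr_fun (TensorProduct.map_comp f g h l).symm u

end CommHelpers

@[simp] lemma famCast_rfl_apply {H : G → Type*} [∀ α, AddCommMonoid (H α)]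
    [∀ α, Module k (H α)] {x : G} (h : x = x) (t : H x) :
    famCast (k := k) (H := H) h t = t := rfl

lemma famCast_comp_apply {H : G → Type*} [∀ α, AddCommMonoid (H α)]
    [∀ α, Module k (H α)] {x y z : G} (h : x = y) (h' : y = z) (t : H x) :
    famCast (k := k) (H := H) h' (famCast (k := k) h t)
      = famCast (k := k) (h.trans h') t := by subst h h'; rfl

namespace HopfGCoalgebra

variable {Hc : HopfGCoalgebra k G}

/-- pointwise form of `antipode_right` -/
lemma AR_pt (γ : G) (y : Hc.H 1) :
    LinearMap.mul' k (Hc.H γ⁻¹)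
        (TensorProduct.map LinearMap.id (Hc.S γ)
          ((Hc.Δ γ⁻¹ γ).toLinearMap (famCast (k := k) (inv_mul_cancel γ).symm y)))
      = algebraMap k (Hc.H γ⁻¹) (Hc.ε y) := by
  have h := LinearMap.congr_fun (Hc.antipode_right γ) y
  simpa only [LinearMap.comp_apply, Algebra.linearMap_apply, AlgHom.toLinearMap_apply] using h

/-- pointwise form of the "clean" left antipode law -/
lemma AL_pt (β : G) (y : Hc.H 1) :
    LinearMap.mul' k (Hc.H β⁻¹)
        (TensorProduct.map (Hc.S β) LinearMap.id
          ((Hc.Δ β β⁻¹).toLinearMap (famCast (k := k) (mul_inv_cancel β).symm y)))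
      = algebraMap k (Hc.H β⁻¹) (Hc.ε y) := by
  have h0 : β = β⁻¹⁻¹ := (inv_inv β).symm
  have h0' : β⁻¹ = β⁻¹⁻¹⁻¹ := by rw [inv_inv]
  have h := LinearMap.congr_fun (Hc.antipode_left β⁻¹) y
  simp only [LinearMap.comp_apply, Algebra.linearMap_apply] at h
  have hc : famCast (k := k) (H := Hc.H) (inv_mul_cancel β⁻¹).symm y
      = famCast (k := k) (show β * β⁻¹ = β⁻¹⁻¹ * β⁻¹ by rw [← h0])
          (famCast (k := k) (mul_inv_cancel β).symm y) := by
    rw [famCast_comp_apply]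
  rw [hc] at h
  have hΔ := LinearMap.congr_fun
    (castΔ_fst (Hc := Hc) h0 β⁻¹ (show β * β⁻¹ = β⁻¹⁻¹ * β⁻¹ by rw [← h0]))
    (famCast (k := k) (mul_inv_cancel β).symm y)
  simp only [LinearMap.comp_apply] at hΔ
  have hfS : (famCast (k := k) (inv_inv β⁻¹) ∘ₗ Hc.S β⁻¹⁻¹) ∘ₗ
      famCast (k := k) (H := Hc.H) h0 = Hc.S β := by
    rw [LinearMap.comp_assoc, castS (Hc := Hc) h0 h0', ← LinearMap.comp_assoc,
      famCast_comp_cancel, LinearMap.id_comp]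
  rw [hΔ, map_map_pt, hfS, LinearMap.comp_id] at h
  exact h

lemma S_one (γ : G) : Hc.S γ 1 = 1 := by
  have h := AR_pt (Hc := Hc) γ 1
  rw [famCast_one] at h
  simpa only [AlgHom.toLinearMap_apply, map_one, Algebra.TensorProduct.one_def,
    TensorProduct.map_tmul, LinearMap.id_coe, id_eq, LinearMap.mul'_apply, one_mul] using h

/-- the candidate anti-multiplicative form of the antipode -/
noncomputable def ν (Hc : HopfGCoalgebra k G) (γ : G) :
    (Hc.H γ ⊗[k] Hc.H γ) →ₗ[k] Hc.H γ⁻¹ :=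
  LinearMap.mul' k (Hc.H γ⁻¹) ∘ₗ TensorProduct.map (Hc.S γ) (Hc.S γ) ∘ₗ
    (TensorProduct.comm k (Hc.H γ) (Hc.H γ)).toLinearMap

@[simp] lemma ν_tmul (γ : G) (x y : Hc.H γ) :
    Hc.ν γ (x ⊗ₜ[k] y) = Hc.S γ y * Hc.S γ x := by simp [ν]

noncomputable def ζ (Hc : HopfGCoalgebra k G) (γ : G) :
    (Hc.H γ ⊗[k] Hc.H γ) →ₗ[k] Hc.H γ⁻¹ :=
  Hc.S γ ∘ₗ LinearMap.mul' k (Hc.H γ)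

@[simp] lemma ζ_tmul (γ : G) (x y : Hc.H γ) :
    Hc.ζ γ (x ⊗ₜ[k] y) = Hc.S γ (x * y) := by simp [ζ]

/-- the three-fold product map used in the `μ ★ ν` computation -/
noncomputable def Gm (Hc : HopfGCoalgebra k G) (γ : G) :
    ((Hc.H γ⁻¹ ⊗[k] Hc.H γ) ⊗[k] Hc.H γ⁻¹) →ₗ[k] Hc.H γ⁻¹ :=
  LinearMap.mul' k (Hc.H γ⁻¹) ∘ₗ
    TensorProduct.map (LinearMap.mul' k (Hc.H γ⁻¹)) (Hc.S γ) ∘ₗ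
    (TensorProduct.assoc k (Hc.H γ⁻¹) (Hc.H γ⁻¹) (Hc.H γ)).symm.toLinearMap ∘ₗ
    TensorProduct.map LinearMap.id (TensorProduct.comm k (Hc.H γ) (Hc.H γ⁻¹)).toLinearMap ∘ₗ
    (TensorProduct.assoc k (Hc.H γ⁻¹) (Hc.H γ) (Hc.H γ⁻¹)).toLinearMap

@[simp] lemma Gm_tmul (γ : G) (t₁ : Hc.H γ⁻¹) (t₂ : Hc.H γ) (b : Hc.H γ⁻¹) :
    Hc.Gm γ ((t₁ ⊗ₜ[k] t₂) ⊗ₜ[k] b) = t₁ * b * Hc.S γ t₂ := by simp [Gm]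

lemma SH1 (γ : G) (p q : Hc.H γ⁻¹ ⊗[k] Hc.H γ) :
    LinearMap.mul' k (Hc.H γ⁻¹)
        (TensorProduct.map (LinearMap.mul' k (Hc.H γ⁻¹)) (Hc.ν γ)
          (TensorProduct.tensorTensorTensorComm k (Hc.H γ⁻¹) (Hc.H γ) (Hc.H γ⁻¹) (Hc.H γ)
            (p ⊗ₜ[k] q)))
      = Hc.Gm γ (p ⊗ₜ[k]
          LinearMap.mul' k (Hc.H γ⁻¹) (TensorProduct.map LinearMap.id (Hc.S γ) q)) := by
  induction p using TensorProduct.induction_on with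
  | zero => simp
  | add a b ha hb => simp only [add_tmul, map_add, ha, hb]
  | tmul p₁ p₂ =>
    induction q using TensorProduct.induction_on with
    | zero => simp
    | add a b ha hb => simp only [tmul_add, map_add, ha, hb]
    | tmul q₁ q₂ => simp [mul_assoc]

lemma SH1b (γ : G) (p : Hc.H γ⁻¹ ⊗[k] Hc.H γ) :
    Hc.Gm γ (p ⊗ₜ[k] (1 : Hc.H γ⁻¹))
      = LinearMap.mul' k (Hc.H γ⁻¹) (TensorProduct.map LinearMap.id (Hc.S γ) p) := by
  induction p using TensorProduct.induction_on with
  | zero => simp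
  | add a b ha hb => simp only [add_tmul, map_add, ha, hb]
  | tmul p₁ p₂ => simp

/-- `μ ★ ν = uεε` -/
lemma mu_conv_nu (γ : G) (t : Hc.H 1 ⊗[k] Hc.H 1) :
    LinearMap.mul' k (Hc.H γ⁻¹)
        (TensorProduct.map (LinearMap.mul' k (Hc.H γ⁻¹)) (Hc.ν γ)
          (Hc.D γ⁻¹ γ
            (famCast (k := k) (H := fun c => Hc.H c ⊗[k] Hc.H c) (inv_mul_cancel γ).symm t)))
      = algebraMap k (Hc.H γ⁻¹) (Hc.εε t) := by
  induction t using TensorProduct.induction_on with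
  | zero => simp
  | add a b ha hb => simp only [map_add, ha, hb]
  | tmul x y =>
    rw [famCastX_eq, TensorProduct.map_tmul, D_tmul, SH1]
    simp only [← AlgHom.toLinearMap_apply]
    rw [AR_pt γ y]
    rw [Algebra.algebraMap_eq_smul_one, tmul_smul, map_smul, SH1b,
      AR_pt γ x]
    simp [εε, Algebra.algebraMap_eq_smul_one, map_mul, smul_smul, mul_comm]

/-- `ζ ★ μ = uεε` -/
lemma zeta_conv_mu (γ : G) (t : Hc.H 1 ⊗[k] Hc.H 1) :
    LinearMap.mul' k (Hc.H γ⁻¹)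
        (TensorProduct.map (Hc.ζ γ) (LinearMap.mul' k (Hc.H γ⁻¹))
          (Hc.D γ γ⁻¹
            (famCast (k := k) (H := fun c => Hc.H c ⊗[k] Hc.H c) (mul_inv_cancel γ).symm t)))
      = algebraMap k (Hc.H γ⁻¹) (Hc.εε t) := by
  have e1 : TensorProduct.map (Hc.ζ γ) (LinearMap.mul' k (Hc.H γ⁻¹))
      = TensorProduct.map (Hc.S γ) LinearMap.id ∘ₗ
          TensorProduct.map (LinearMap.mul' k (Hc.H γ)) (LinearMap.mul' k (Hc.H γ⁻¹)) := by
    rw [← TensorProduct.map_comp, LinearMap.id_comp]; rfl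
  rw [e1, LinearMap.comp_apply]
  have e2 := LinearMap.congr_fun (Δ_mul' (Hc := Hc) γ γ⁻¹)
    (famCast (k := k) (H := fun c => Hc.H c ⊗[k] Hc.H c) (mul_inv_cancel γ).symm t)
  simp only [LinearMap.comp_apply] at e2
  rw [← e2]
  have e3 : LinearMap.mul' k (Hc.H (γ * γ⁻¹))
      (famCast (k := k) (H := fun c => Hc.H c ⊗[k] Hc.H c) (mul_inv_cancel γ).symm t)
      = famCast (k := k) (mul_inv_cancel γ).symm (LinearMap.mul' k (Hc.H 1) t) := by
    have h4 := LinearMap.congr_fun (famCast_mul' (Hc := Hc) (mul_inv_cancel γ).symm) t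
    simp only [LinearMap.comp_apply] at h4
    rw [famCastX_eq]
    exact h4.symm
  rw [e3, AL_pt γ (LinearMap.mul' k (Hc.H 1) t)]
  rfl

end HopfGCoalgebra

namespace HopfGCoalgebra

variable {Hc : HopfGCoalgebra k G}

/-- The antipode is anti-multiplicative. -/
lemma S_antimul (γ : G) : Hc.ζ γ = Hc.ν γ := by
  have hB : Algebra.linearMap k (Hc.H γ⁻¹) ∘ₗ Hc.εε
      = LinearMap.mul' k (Hc.H γ⁻¹) ∘ₗ
          TensorProduct.map (LinearMap.mul' k (Hc.H γ⁻¹)) (Hc.ν γ) ∘ₗ Hc.D γ⁻¹ γ ∘ₗ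
          famCast (k := k) (H := fun c => Hc.H c ⊗[k] Hc.H c) (inv_mul_cancel γ).symm := by
    apply LinearMap.ext; intro t
    simp only [LinearMap.comp_apply, Algebra.linearMap_apply]
    exact (mu_conv_nu γ t).symm
  have hD : LinearMap.mul' k (Hc.H γ⁻¹) ∘ₗ
        TensorProduct.map (Hc.ζ γ) (LinearMap.mul' k (Hc.H γ⁻¹)) ∘ₗ Hc.D γ γ⁻¹
      = Algebra.linearMap k (Hc.H γ⁻¹) ∘ₗ Hc.εε ∘ₗ
          famCast (k := k) (H := fun c => Hc.H c ⊗[k] Hc.H c) (mul_inv_cancel γ) := by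
    apply LinearMap.ext; intro s
    simp only [LinearMap.comp_apply, Algebra.linearMap_apply]
    have h := zeta_conv_mu γ
      (famCast (k := k) (H := fun c => Hc.H c ⊗[k] Hc.H c) (mul_inv_cancel γ) s)
    rw [famCast_comp_apply, famCast_rfl_apply] at h
    exact h
  apply LinearMap.ext; intro t
  have h1 := conv_unit_right (Hc := Hc) (Hc.ζ γ)
    (famCast (k := k) (H := fun c => Hc.H c ⊗[k] Hc.H c) (mul_one γ).symm t)
  rw [famCast_comp_apply, famCast_rfl_apply] at h1
  rw [← h1, hB]
  have e2 : TensorProduct.map (Hc.ζ γ)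
      ((LinearMap.mul' k (Hc.H γ⁻¹) ∘ₗ
          TensorProduct.map (LinearMap.mul' k (Hc.H γ⁻¹)) (Hc.ν γ) ∘ₗ Hc.D γ⁻¹ γ) ∘ₗ
        famCast (k := k) (H := fun c => Hc.H c ⊗[k] Hc.H c) (inv_mul_cancel γ).symm)
      = TensorProduct.map (Hc.ζ γ)
          (LinearMap.mul' k (Hc.H γ⁻¹) ∘ₗ
            TensorProduct.map (LinearMap.mul' k (Hc.H γ⁻¹)) (Hc.ν γ) ∘ₗ Hc.D γ⁻¹ γ) ∘ₗ
        TensorProduct.map LinearMap.id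
          (famCast (k := k) (H := fun c => Hc.H c ⊗[k] Hc.H c) (inv_mul_cancel γ).symm) := by
    rw [← TensorProduct.map_comp, LinearMap.comp_id]
  have e2' : TensorProduct.map (Hc.ζ γ)
      (LinearMap.mul' k (Hc.H γ⁻¹) ∘ₗ
        TensorProduct.map (LinearMap.mul' k (Hc.H γ⁻¹)) (Hc.ν γ) ∘ₗ Hc.D γ⁻¹ γ ∘ₗ
        famCast (k := k) (H := fun c => Hc.H c ⊗[k] Hc.H c) (inv_mul_cancel γ).symm)
      = TensorProduct.map (Hc.ζ γ)
          (LinearMap.mul' k (Hc.H γ⁻¹) ∘ₗ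
            TensorProduct.map (LinearMap.mul' k (Hc.H γ⁻¹)) (Hc.ν γ) ∘ₗ Hc.D γ⁻¹ γ) ∘ₗ
        TensorProduct.map LinearMap.id
          (famCast (k := k) (H := fun c => Hc.H c ⊗[k] Hc.H c) (inv_mul_cancel γ).symm) := by
    rw [← e2]
    congr 1
    all_goals simp only [LinearMap.comp_assoc]
  rw [e2', LinearMap.comp_apply]
  have e3 := LinearMap.congr_fun
    (castD_snd (Hc := Hc) (inv_mul_cancel γ).symm γ
      (show γ * 1 = γ * (γ⁻¹ * γ) by rw [inv_mul_cancel]))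
    (famCast (k := k) (H := fun c => Hc.H c ⊗[k] Hc.H c) (mul_one γ).symm t)
  simp only [LinearMap.comp_apply] at e3
  rw [← e3, famCast_comp_apply]
  have e4 : famCast (k := k) (H := fun c => Hc.H c ⊗[k] Hc.H c)
      (((mul_one γ).symm).trans (show γ * 1 = γ * (γ⁻¹ * γ) by rw [inv_mul_cancel])) t
      = famCast (k := k) (H := fun c => Hc.H c ⊗[k] Hc.H c) (mul_assoc γ γ⁻¹ γ)
          (famCast (k := k) (H := fun c => Hc.H c ⊗[k] Hc.H c)
            (show γ = γ * γ⁻¹ * γ by rw [mul_inv_cancel, one_mul]) t) := by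
    rw [famCast_comp_apply]
  rw [e4, ← conv_assoc (Hc := Hc) (Hc.ζ γ) (LinearMap.mul' k (Hc.H γ⁻¹)) (Hc.ν γ)]
  have e5 : TensorProduct.map
      (LinearMap.mul' k (Hc.H γ⁻¹) ∘ₗ
        TensorProduct.map (Hc.ζ γ) (LinearMap.mul' k (Hc.H γ⁻¹)) ∘ₗ Hc.D γ γ⁻¹) (Hc.ν γ)
      = TensorProduct.map (Algebra.linearMap k (Hc.H γ⁻¹) ∘ₗ Hc.εε) (Hc.ν γ) ∘ₗ
          TensorProduct.map
            (famCast (k := k) (H := fun c => Hc.H c ⊗[k] Hc.H c) (mul_inv_cancel γ))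
            LinearMap.id := by
    rw [← TensorProduct.map_comp, LinearMap.comp_id, hD, LinearMap.comp_assoc]
  rw [e5, LinearMap.comp_apply]
  have e6 := LinearMap.congr_fun
    (castD_fst (Hc := Hc) (mul_inv_cancel γ) γ
      (show γ * γ⁻¹ * γ = 1 * γ by rw [mul_inv_cancel]))
    (famCast (k := k) (H := fun c => Hc.H c ⊗[k] Hc.H c)
      (show γ = γ * γ⁻¹ * γ by rw [mul_inv_cancel, one_mul]) t)
  simp only [LinearMap.comp_apply] at e6
  rw [← e6, famCast_comp_apply]
  have e7 := conv_unit_left (Hc := Hc) (Hc.ν γ)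
    (famCast (k := k) (H := fun c => Hc.H c ⊗[k] Hc.H c)
      ((show γ = γ * γ⁻¹ * γ by rw [mul_inv_cancel, one_mul]).trans
        (show γ * γ⁻¹ * γ = 1 * γ by rw [mul_inv_cancel])) t)
  rw [e7, famCast_comp_apply, famCast_rfl_apply]

lemma S_antimul_pt (γ : G) (t : Hc.H γ ⊗[k] Hc.H γ) :
    Hc.S γ (LinearMap.mul' k (Hc.H γ) t)
      = LinearMap.mul' k (Hc.H γ⁻¹)
          (TensorProduct.map (Hc.S γ) (Hc.S γ) (TensorProduct.comm k _ _ t)) := by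
  have := LinearMap.congr_fun (S_antimul (Hc := Hc) γ) t
  simpa only [ζ, ν, LinearMap.comp_apply, LinearEquiv.coe_coe] using this

/-- The key identity `∑ x₂ · S⁻¹(x₁) = ε(x) 1`. -/
lemma KEYH (Sinv : ∀ α : G, Hc.H α⁻¹ →ₗ[k] Hc.H α) (α : G)
    (hS1 : Sinv α ∘ₗ Hc.S α = LinearMap.id) (hS2 : Hc.S α ∘ₗ Sinv α = LinearMap.id)
    (t : Hc.H 1) :
    LinearMap.mul' k (Hc.H α)
        (TensorProduct.map LinearMap.id (Sinv α)
          (TensorProduct.comm k _ _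
            ((Hc.Δ α⁻¹ α).toLinearMap (famCast (k := k) (inv_mul_cancel α).symm t))))
      = algebraMap k (Hc.H α) (Hc.ε t) := by
  set u := (Hc.Δ α⁻¹ α).toLinearMap (famCast (k := k) (inv_mul_cancel α).symm t) with hu
  have key : Hc.S α (LinearMap.mul' k (Hc.H α)
      (TensorProduct.map LinearMap.id (Sinv α) (TensorProduct.comm k _ _ u)))
      = Hc.S α (algebraMap k (Hc.H α) (Hc.ε t)) := by
    rw [S_antimul_pt, comm_map_pt, comm_comm_pt, map_map_pt, hS2,
      LinearMap.comp_id]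
    rw [hu, AR_pt]
    rw [Algebra.algebraMap_eq_smul_one, Algebra.algebraMap_eq_smul_one, map_smul, S_one]
  have h1 := LinearMap.congr_fun hS1
    (LinearMap.mul' k (Hc.H α)
      (TensorProduct.map LinearMap.id (Sinv α) (TensorProduct.comm k _ _ u)))
  have h2 := LinearMap.congr_fun hS1 (algebraMap k (Hc.H α) (Hc.ε t))
  simp only [LinearMap.comp_apply, LinearMap.id_coe, id_eq] at h1 h2
  rw [← h1, key, h2]

end HopfGCoalgebra


section MainAux

variable {Hc : HopfGCoalgebra k G} {Ac : GComodulePoissonAlgebra Hc}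

lemma castρM_fst {Mc : PoissonHopfModule Ac} {a a' : G} (h : a = a') (b : G)
    (h' : a * b = a' * b) :
    Mc.ρ a' b ∘ₗ famCast (k := k) (H := Mc.M) h'
      = TensorProduct.map (famCast (k := k) (H := Mc.M) h) LinearMap.id ∘ₗ Mc.ρ a b := by
  subst h; simp

lemma castρM_snd {Mc : PoissonHopfModule Ac} {b b' : G} (h : b = b') (a : G)
    (h' : a * b = a * b') :
    Mc.ρ a b' ∘ₗ famCast (k := k) (H := Mc.M) h'
      = TensorProduct.map LinearMap.id (famCast (k := k) (H := Hc.H) h) ∘ₗ Mc.ρ a b := by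
  subst h; simp

lemma phi_mul'_pt (φ : ∀ α : G, Hc.H α →ₗ[k] Ac.A α)
    (hφmul : ∀ (α : G) (x y : Hc.H α), φ α (x * y) = φ α x * φ α y) (α : G)
    (w : Hc.H α ⊗[k] Hc.H α) :
    LinearMap.mul' k (Ac.A α) (TensorProduct.map (φ α) (φ α) w)
      = φ α (LinearMap.mul' k (Hc.H α) w) := by
  induction w using TensorProduct.induction_on with
  | zero => simp
  | add a b ha hb => simp only [map_add, ha, hb]
  | tmul x y => simp [hφmul]

/-- The key identity, pushed into `A` by `φ`:
`∑ φ(S⁻¹(x₁)) φ(x₂) = ε(x) 1`. -/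
lemma KEYA (φ : ∀ α : G, Hc.H α →ₗ[k] Ac.A α)
    (hφ1 : ∀ α : G, φ α (1 : Hc.H α) = 1)
    (hφmul : ∀ (α : G) (x y : Hc.H α), φ α (x * y) = φ α x * φ α y)
    (Sinv : ∀ α : G, Hc.H α⁻¹ →ₗ[k] Hc.H α) (hSinv : IsAntipodeInv Hc Sinv)
    (α : G) (t : Hc.H 1) :
    LinearMap.mul' k (Ac.A α)
        (TensorProduct.map (φ α ∘ₗ Sinv α) (φ α)
          ((Hc.Δ α⁻¹ α).toLinearMap (famCast (k := k) (inv_mul_cancel α).symm t)))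
      = algebraMap k (Ac.A α) (Hc.ε t) := by
  set u := (Hc.Δ α⁻¹ α).toLinearMap (famCast (k := k) (inv_mul_cancel α).symm t) with hu
  have c0 := LinearMap.congr_fun (mul'_comm (k := k) (C := Ac.A α))
    (TensorProduct.map (φ α ∘ₗ Sinv α) (φ α) u)
  simp only [LinearMap.comp_apply, LinearEquiv.coe_coe] at c0
  rw [← c0, comm_map_pt]
  have c1 : TensorProduct.map (φ α) (φ α ∘ₗ Sinv α) (TensorProduct.comm k _ _ u)
      = TensorProduct.map (φ α) (φ α)
          (TensorProduct.map LinearMap.id (Sinv α) (TensorProduct.comm k _ _ u)) := by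
    rw [map_map_pt, LinearMap.comp_id]
  rw [c1, phi_mul'_pt φ hφmul, hu, HopfGCoalgebra.KEYH Sinv α (hSinv α).1 (hSinv α).2 t,
    Algebra.algebraMap_eq_smul_one, map_smul, hφ1, ← Algebra.algebraMap_eq_smul_one]

/-- The multiplication-collapsing operator used in the main proof. -/
noncomputable def BigOp (Mc : PoissonHopfModule Ac)
    (φ : ∀ α : G, Hc.H α →ₗ[k] Ac.A α)
    (Sinv : ∀ α : G, Hc.H α⁻¹ →ₗ[k] Hc.H α) (α : G) :
    (Mc.M α ⊗[k] (Hc.H α⁻¹ ⊗[k] Hc.H α)) →ₗ[k] Mc.M α :=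
  TensorProduct.lift ((Mc.smul α).flip) ∘ₗ
    TensorProduct.map LinearMap.id
      (LinearMap.mul' k (Ac.A α) ∘ₗ TensorProduct.map (φ α ∘ₗ Sinv α) (φ α))

@[simp] lemma BigOp_tmul (Mc : PoissonHopfModule Ac)
    (φ : ∀ α : G, Hc.H α →ₗ[k] Ac.A α)
    (Sinv : ∀ α : G, Hc.H α⁻¹ →ₗ[k] Hc.H α) (α : G) (m : Mc.M α)
    (z : Hc.H α⁻¹ ⊗[k] Hc.H α) :
    BigOp Mc φ Sinv α (m ⊗ₜ[k] z)
      = Mc.smul α (LinearMap.mul' k (Ac.A α)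
          (TensorProduct.map (φ α ∘ₗ Sinv α) (φ α) z)) m := by
  simp [BigOp]

lemma PT1b (Mc : PoissonHopfModule Ac) (φ : ∀ α : G, Hc.H α →ₗ[k] Ac.A α)
    (Sinv : ∀ α : G, Hc.H α⁻¹ →ₗ[k] Hc.H α) (α : G)
    (r : Mc.M α ⊗[k] Hc.H α⁻¹) (h : Hc.H α) :
    Mc.smul α (φ α h)
        (TensorProduct.lift ((Mc.smul α).flip)
          (TensorProduct.map LinearMap.id (φ α ∘ₗ Sinv α) r))
      = BigOp Mc φ Sinv α
          (TensorProduct.assoc k (Mc.M α) (Hc.H α⁻¹) (Hc.H α) (r ⊗ₜ[k] h)) := by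
  induction r using TensorProduct.induction_on with
  | zero => simp
  | add a b ha hb => simp only [map_add, add_tmul, ha, hb]
  | tmul m' a =>
    simp only [TensorProduct.map_tmul, TensorProduct.lift.tmul, LinearMap.flip_apply,
      LinearMap.comp_apply, LinearMap.id_coe, id_eq, TensorProduct.assoc_tmul,
      BigOp_tmul, LinearMap.mul'_apply]
    rw [← Mc.mul_smul, mul_comm (φ α h), Mc.mul_smul]

lemma PT1 (Mc : PoissonHopfModule Ac) (φ : ∀ α : G, Hc.H α →ₗ[k] Ac.A α)
    (Sinv : ∀ α : G, Hc.H α⁻¹ →ₗ[k] Hc.H α) (α : G)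
    (u : Mc.M (α * α⁻¹) ⊗[k] Hc.H α) :
    TensorProduct.lift ((Mc.smul α ∘ₗ φ α).flip ∘ₗ pMapM Mc φ Sinv α)
        (TensorProduct.map (famCast (k := k) (H := Mc.M) (mul_inv_cancel α))
          LinearMap.id u)
      = BigOp Mc φ Sinv α
          (TensorProduct.assoc k _ _ _
            (TensorProduct.map (Mc.ρ α α⁻¹) LinearMap.id u)) := by
  induction u using TensorProduct.induction_on with
  | zero => simp
  | add a b ha hb => simp only [map_add, ha, hb]
  | tmul n h =>
    simp only [TensorProduct.map_tmul, TensorProduct.lift.tmul, LinearMap.flip_apply,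
      LinearMap.comp_apply, LinearMap.id_coe, id_eq, pMapM,
      famCast_comp_apply, famCast_rfl_apply]
    exact PT1b Mc φ Sinv α (Mc.ρ α α⁻¹ n) h

lemma PT2 (Mc : PoissonHopfModule Ac) (φ : ∀ α : G, Hc.H α →ₗ[k] Ac.A α)
    (hφ1 : ∀ α : G, φ α (1 : Hc.H α) = 1)
    (hφmul : ∀ (α : G) (x y : Hc.H α), φ α (x * y) = φ α x * φ α y)
    (Sinv : ∀ α : G, Hc.H α⁻¹ →ₗ[k] Hc.H α) (hSinv : IsAntipodeInv Hc Sinv)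
    (α : G) (W : Mc.M α ⊗[k] Hc.H 1) :
    BigOp Mc φ Sinv α
        (TensorProduct.map LinearMap.id
          ((Hc.Δ α⁻¹ α).toLinearMap ∘ₗ famCast (k := k) (inv_mul_cancel α).symm) W)
      = TensorProduct.rid k (Mc.M α)
          (TensorProduct.map LinearMap.id Hc.ε.toLinearMap W) := by
  induction W using TensorProduct.induction_on with
  | zero => simp
  | add a b ha hb => simp only [map_add, ha, hb]
  | tmul m' x =>
    simp only [TensorProduct.map_tmul, LinearMap.comp_apply, LinearMap.id_coe, id_eq,
      BigOp_tmul, TensorProduct.rid_tmul]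
    rw [KEYA φ hφ1 hφmul Sinv hSinv α x, Algebra.algebraMap_eq_smul_one, map_smul,
      LinearMap.smul_apply, Mc.one_smul, AlgHom.toLinearMap_apply]

end MainAux


/-- For all `m ∈ M_α`: `φ_α(m_{(1,α)}) · p^M_α(m_{(0,e)}) = m`. -/
theorem phi_pMap_section (Mc : PoissonHopfModule Ac)
    (φ : ∀ α : G, Hc.H α →ₗ[k] Ac.A α) (Sinv : ∀ α : G, Hc.H α⁻¹ →ₗ[k] Hc.H α)
    (hφcol : PhiColinear φ) (hφ1 : ∀ α : G, φ α (1 : Hc.H α) = 1)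
    (hφmul : ∀ (α : G) (x y : Hc.H α), φ α (x * y) = φ α x * φ α y)
    (hSinv : IsAntipodeInv Hc Sinv) :
    ∀ α : G,
      TensorProduct.lift ((Mc.smul α ∘ₗ φ α).flip ∘ₗ pMapM Mc φ Sinv α) ∘ₗ
          Mc.ρ 1 α ∘ₗ famCast (k := k) (one_mul α).symm
        = LinearMap.id := by
  intro α
  apply LinearMap.ext; intro m
  simp only [LinearMap.comp_apply, LinearMap.id_coe, id_eq]
  have pp : α = α * α⁻¹ * α := by rw [mul_inv_cancel, one_mul]
  have hA := LinearMap.congr_fun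
    (castρM_fst (Mc := Mc) (mul_inv_cancel α) α
      (show α * α⁻¹ * α = 1 * α by rw [mul_inv_cancel]))
    (famCast (k := k) (H := Mc.M) pp m)
  simp only [LinearMap.comp_apply] at hA
  rw [famCast_comp_apply] at hA
  have harg : famCast (k := k) (H := Mc.M) (one_mul α).symm m
      = famCast (k := k) (H := Mc.M)
          (pp.trans (show α * α⁻¹ * α = 1 * α by rw [mul_inv_cancel])) m := rfl
  rw [harg, hA, PT1 Mc φ Sinv α]
  have hB := LinearMap.congr_fun (Mc.coassoc α α⁻¹ α)
    (famCast (k := k) (H := Mc.M) pp m)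
  simp only [LinearMap.comp_apply, LinearEquiv.coe_coe] at hB
  rw [hB, famCast_comp_apply]
  have hC := LinearMap.congr_fun
    (castρM_snd (Mc := Mc) (inv_mul_cancel α).symm α
      (show α * 1 = α * (α⁻¹ * α) by rw [inv_mul_cancel]))
    (famCast (k := k) (H := Mc.M) (mul_one α).symm m)
  simp only [LinearMap.comp_apply] at hC
  rw [famCast_comp_apply] at hC
  have harg2 : famCast (k := k) (H := Mc.M) (pp.trans (mul_assoc α α⁻¹ α)) m
      = famCast (k := k) (H := Mc.M)
          (((mul_one α).symm).trans
            (show α * 1 = α * (α⁻¹ * α) by rw [inv_mul_cancel])) m := rfl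
  rw [harg2, hC, map_map_pt, LinearMap.id_comp]
  rw [PT2 Mc φ hφ1 hφmul Sinv hSinv α]
  have hD := LinearMap.congr_fun (Mc.counit α)
    (famCast (k := k) (H := Mc.M) (mul_one α).symm m)
  simp only [LinearMap.comp_apply, LinearEquiv.coe_coe] at hD
  rw [hD, famCast_comp_apply, famCast_rfl_apply]
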